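/- Let K be the Erdős–Rényi random graph G(n,p) with n ≥ 2 and p ∈ (0,1), let Y be its number of isolated vertices, and let Y^s be the number of isolated vertices of the graph obtained from K by deleting all edges incident to a uniformly chosen vertex V' independent of K. Then for all θ ≥ 0, E(e^{θY^s} − e^{θY}) ≤ (θ γ_θ / 2) · E(e^{θY}), where γ_θ = e^θ(φ_θ + α_θ) + (n−1)p + 1 with α_θ = (p e^θ + 1 − p)^{n−1} and φ_θ = (n−1) p e^θ (p e^θ + 1 − p)^{n−2}. -/

import Mathlib

/-!
Deleting the edges at `V'` only creates isolated vertices, and only `V'` and its neighbours can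
become isolated, so `Y ≤ Yˢ ≤ Y + 1 + d(V')`. Convexity of `exp` (the trapezoid rule) then gives
`e^{θYˢ} - e^{θY} ≤ θ/2 · g(d(V')) · e^{θY}` with `g(k) = (1 + k)(1 + e^{θ(1+k)})`. For fixed `V'`,
`e^{θY}` is decreasing and `g(d(V'))` increasing in the edge set, so Harris' inequality bounds the
mean of their product by the product of their means; finally `d(V') ~ Bin(n - 1, p)`, whose
generating function and its derivative give `E g(d(V')) = γ_θ`.
-/

open MeasureTheory ProbabilityTheory Real Finset

noncomputable section

namespace ErdosRenyiIsolated

/-- Index set for the potential edges of a graph on `Fin n`. -/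
abbrev EdgeIdx (n : ℕ) := {e : Fin n × Fin n // e.1 < e.2}

/-- Adjacency relation of the random graph encoded by `ω` : `u` and `v` are adjacent
if the corresponding edge indicator is `true`. -/
def adj {n : ℕ} (ω : EdgeIdx n → Bool) (u v : Fin n) : Prop :=
  if h : u < v then ω ⟨(u, v), h⟩ = true
  else if h' : v < u then ω ⟨(v, u), h'⟩ = true
  else False

instance {n : ℕ} (ω : EdgeIdx n → Bool) (u v : Fin n) : Decidable (adj ω u v) := by
  unfold adj
  split
  · exact inferInstance
  · split
    · exact inferInstance
    · exact inferInstance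

/-- Degree of vertex `v` in the graph encoded by `ω`. -/
def deg {n : ℕ} (ω : EdgeIdx n → Bool) (v : Fin n) : ℕ :=
  (Finset.univ.filter fun w => adj ω v w).card

/-- The number of isolated vertices of the graph encoded by `ω`. -/
def isolCount {n : ℕ} (ω : EdgeIdx n → Bool) : ℕ :=
  (Finset.univ.filter fun v => deg ω v = 0).card

/-- The Bernoulli(p) measure on `Bool`. -/
def bern (p : ℝ) : Measure Bool :=
  ENNReal.ofReal p • Measure.dirac true + ENNReal.ofReal (1 - p) • Measure.dirac false

instance (p : ℝ) : IsFiniteMeasure (bern p) := by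
  constructor
  have h : bern p Set.univ ≤ ENNReal.ofReal p + ENNReal.ofReal (1 - p) := by
    simp [bern]
  exact lt_of_le_of_lt h (ENNReal.add_lt_top.mpr ⟨ENNReal.ofReal_lt_top, ENNReal.ofReal_lt_top⟩)

/-- The Erdős–Rényi random graph measure `G(n,p)`: the edge indicators are i.i.d.
Bernoulli(p). -/
def gnp (n : ℕ) (p : ℝ) : Measure (EdgeIdx n → Bool) :=
  Measure.pi fun _ => bern p

/-- The Erdős–Rényi measure together with an independent uniformly chosen vertex. -/
def gnpV (n : ℕ) (p : ℝ) : Measure ((EdgeIdx n → Bool) × Fin n) :=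
  (gnp n p).prod (uniformOn (Set.univ : Set (Fin n)))

/-- Adjacency in the graph obtained by deleting all edges incident to `v'`. -/
def adjDel {n : ℕ} (ω : EdgeIdx n → Bool) (v' u v : Fin n) : Prop :=
  adj ω u v ∧ u ≠ v' ∧ v ≠ v'

instance {n : ℕ} (ω : EdgeIdx n → Bool) (v' u v : Fin n) : Decidable (adjDel ω v' u v) := by
  unfold adjDel; exact inferInstance

/-- Degree of `v` in the graph `ω` with all edges incident to `v'` deleted. -/
def degDel {n : ℕ} (ω : EdgeIdx n → Bool) (v' v : Fin n) : ℕ :=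
  (Finset.univ.filter fun w => adjDel ω v' v w).card

/-- Number of isolated vertices in the graph `ω` with all edges incident to `v'` deleted. -/
def isolCountDel {n : ℕ} (ω : EdgeIdx n → Bool) (v' : Fin n) : ℕ :=
  (Finset.univ.filter fun v => degDel ω v' v = 0).card


section BernoulliWeight

variable {ι : Type*} [Fintype ι] {p : ℝ}

def bernWeight (p : ℝ) (ω : ι → Bool) : ℝ := ∏ i, if ω i then p else 1 - p

lemma bernWeight_nonneg (hp₀ : 0 ≤ p) (hp₁ : p ≤ 1) (ω : ι → Bool) : 0 ≤ bernWeight p ω :=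
  prod_nonneg fun i _ => by split <;> linarith

lemma sum_bernWeight_mul_prod [DecidableEq ι] (f : ι → Bool → ℝ) :
    ∑ ω, bernWeight p ω * ∏ i, f i (ω i) = ∏ i, (p * f i true + (1 - p) * f i false) := by
  simp_rw [bernWeight, ← prod_mul_distrib]
  rw [← Fintype.piFinset_univ,
    ← prod_univ_sum (fun _ => univ) fun i b => (if b then p else 1 - p) * f i b]
  exact prod_congr rfl fun i _ => by simp

lemma sum_bernWeight [DecidableEq ι] : ∑ ω : ι → Bool, bernWeight p ω = 1 := by
  simpa using sum_bernWeight_mul_prod (p := p) fun (_ : ι) (_ : Bool) => (1 : ℝ)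

lemma bernWeight_inf_mul_bernWeight_sup (ω ω' : ι → Bool) :
    bernWeight p (ω ⊓ ω') * bernWeight p (ω ⊔ ω') = bernWeight p ω * bernWeight p ω' := by
  simp_rw [bernWeight, ← prod_mul_distrib]
  refine prod_congr rfl fun i _ => ?_
  simp only [Pi.inf_apply, Pi.sup_apply]
  rcases Bool.eq_false_or_eq_true (ω i) with h | h <;>
    rcases Bool.eq_false_or_eq_true (ω' i) with h' | h' <;> simp [h, h', mul_comm]

end BernoulliWeight

section Harris

variable {α : Type*} [DistribLattice α] [Fintype α] {μ : α → ℝ}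

/-- Shifting `f` and `g` to be nonnegative does not change their covariance under `μ`. -/
lemma fkg_of_sum_eq_one (hμ₀ : 0 ≤ μ) (hμ₁ : ∑ a, μ a = 1)
    (hμ : ∀ a b, μ a * μ b ≤ μ (a ⊓ b) * μ (a ⊔ b)) {f g : α → ℝ}
    (hf : Monotone f) (hg : Monotone g) :
    (∑ a, μ a * f a) * ∑ a, μ a * g a ≤ ∑ a, μ a * (f a * g a) := by
  obtain ⟨c, hc⟩ := Finite.bddBelow_range f
  obtain ⟨d, hd⟩ := Finite.bddBelow_range g
  have hshift := fkg (fun a => f a - c) (fun a => g a - d) μ hμ₀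
    (fun a => sub_nonneg.2 (hc ⟨a, rfl⟩)) (fun a => sub_nonneg.2 (hd ⟨a, rfl⟩))
    (fun a b h => by simpa using hf h) (fun a b h => by simpa using hg h) hμ
  have expand : ∀ a, μ a * ((f a - c) * (g a - d))
      = μ a * (f a * g a) - d * (μ a * f a) - c * (μ a * g a) + c * d * μ a := fun a => by ring
  simp only [expand] at hshift
  simp only [mul_sub, sum_add_distrib, sum_sub_distrib, ← mul_sum, ← sum_mul, hμ₁] at hshift
  linarith

lemma harris_of_sum_eq_one (hμ₀ : 0 ≤ μ) (hμ₁ : ∑ a, μ a = 1)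
    (hμ : ∀ a b, μ a * μ b ≤ μ (a ⊓ b) * μ (a ⊔ b)) {f g : α → ℝ}
    (hf : Antitone f) (hg : Monotone g) :
    ∑ a, μ a * (f a * g a) ≤ (∑ a, μ a * f a) * ∑ a, μ a * g a := by
  have := fkg_of_sum_eq_one hμ₀ hμ₁ hμ hf.neg hg
  simp only [mul_neg, neg_mul, sum_neg_distrib] at this
  linarith

lemma harris_bernWeight {ι : Type*} [Fintype ι] [DecidableEq ι] {p : ℝ} (hp₀ : 0 ≤ p)
    (hp₁ : p ≤ 1) {f g : (ι → Bool) → ℝ} (hf : Antitone f) (hg : Monotone g) :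
    ∑ ω, bernWeight p ω * (f ω * g ω) ≤ (∑ ω, bernWeight p ω * f ω) * ∑ ω, bernWeight p ω * g ω :=
  harris_of_sum_eq_one (bernWeight_nonneg hp₀ hp₁) sum_bernWeight
    (fun ω ω' => (bernWeight_inf_mul_bernWeight_sup ω ω').ge) hf hg

end Harris

section TrueCount

variable {ι : Type*} [Fintype ι] [DecidableEq ι] {p : ℝ}

def trueCount (s : Finset ι) (ω : ι → Bool) : ℕ := #{i ∈ s | ω i}

lemma sum_bernWeight_mul_pow_trueCount (s : Finset ι) (x : ℝ) :
    ∑ ω, bernWeight p ω * x ^ trueCount s ω = (p * x + (1 - p)) ^ #s := by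
  have hprod : ∀ ω : ι → Bool, x ^ trueCount s ω = ∏ i, if i ∈ s ∧ ω i then x else 1 := by
    intro ω
    rw [trueCount, ← prod_const, prod_filter, ← Fintype.prod_ite_mem]
    exact prod_congr rfl fun i _ => by by_cases hi : i ∈ s <;> simp [hi]
  simp_rw [hprod, sum_bernWeight_mul_prod (fun i (b : Bool) => if i ∈ s ∧ b then x else 1)]
  rw [← prod_const, ← Fintype.prod_ite_mem s fun _ => p * x + (1 - p)]
  exact prod_congr rfl fun i _ => by by_cases hi : i ∈ s <;> simp [hi]

/-- Differentiate the generating function `sum_bernWeight_mul_pow_trueCount` in `x`. -/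
lemma sum_bernWeight_mul_trueCount_mul_pow (s : Finset ι) (x : ℝ) :
    ∑ ω, bernWeight p ω * (trueCount s ω * x ^ trueCount s ω)
      = #s * (p * x) * (p * x + (1 - p)) ^ (#s - 1) := by
  have hderiv : HasDerivAt (fun y => ∑ ω, bernWeight p ω * y ^ trueCount s ω)
      (∑ ω, bernWeight p ω * (trueCount s ω * x ^ (trueCount s ω - 1))) x :=
    HasDerivAt.fun_sum fun ω _ => (hasDerivAt_pow _ x).const_mul _
  have hderiv' : HasDerivAt (fun y => ∑ ω, bernWeight p ω * y ^ trueCount s ω)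
      (#s * (p * x + (1 - p)) ^ (#s - 1) * p) x := by
    simp_rw [sum_bernWeight_mul_pow_trueCount]
    exact ((hasDerivAt_id x).const_mul p |>.add_const _).pow _ |>.congr_deriv (by simp)
  have hpow : ∀ k : ℕ, (k : ℝ) * x ^ k = x * (k * x ^ (k - 1)) := by
    rintro (_ | k)
    · simp
    · simp only [Nat.add_sub_cancel, pow_succ]; ring
  simp_rw [hpow, mul_left_comm _ x, ← mul_sum, hderiv.unique hderiv']
  ring

end TrueCount

section ExpBounds

/-- The trapezoid rule overestimates `∫₀ᵗ exp`, since `exp` is convex. -/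
lemma exp_sub_one_le_mul_one_add_exp_div_two {t : ℝ} (ht : 0 ≤ t) :
    exp t - 1 ≤ t * (1 + exp t) / 2 := by
  let h : ℝ → ℝ := fun t => t * (1 + exp t) / 2 - (exp t - 1)
  have hderiv : ∀ x, HasDerivAt h ((1 + (x - 1) * exp x) / 2) x := fun x => by
    have := (((hasDerivAt_id x).mul ((hasDerivAt_exp x).const_add 1)).div_const 2).sub
      ((hasDerivAt_exp x).sub_const 1)
    exact this.congr_deriv (by simp only [id]; ring)
  have hmono : MonotoneOn h (Set.Ici 0) := by
    refine monotoneOn_of_deriv_nonneg (convex_Ici 0) (by fun_prop)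
      (fun x _ => (hderiv x).differentiableAt.differentiableWithinAt) fun x _ => ?_
    have h₁ : (1 - x) * exp x ≤ 1 := by
      have := mul_le_mul_of_nonneg_right (add_one_le_exp (-x)) (exp_pos x).le
      rwa [← exp_add, neg_add_cancel, exp_zero, neg_add_eq_sub] at this
    rw [(hderiv x).deriv]
    linarith
  simpa [h] using hmono Set.self_mem_Ici (Set.mem_Ici.2 ht) ht

lemma exp_mul_sub_exp_mul_le {θ a b D : ℝ} (hθ : 0 ≤ θ) (hab : a ≤ b) (hbD : b ≤ a + D) :
    exp (θ * b) - exp (θ * a) ≤ θ * D * (1 + exp (θ * D)) / 2 * exp (θ * a) := by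
  have ht : 0 ≤ θ * (b - a) := mul_nonneg hθ (by linarith)
  have htD : θ * (b - a) ≤ θ * D := mul_le_mul_of_nonneg_left (by linarith) hθ
  calc exp (θ * b) - exp (θ * a) = (exp (θ * (b - a)) - 1) * exp (θ * a) := by
        rw [sub_one_mul, ← exp_add]; ring_nf
    _ ≤ θ * (b - a) * (1 + exp (θ * (b - a))) / 2 * exp (θ * a) := by
        gcongr; exact exp_sub_one_le_mul_one_add_exp_div_two ht
    _ ≤ θ * D * (1 + exp (θ * D)) / 2 * exp (θ * a) := by
        have := exp_pos (θ * a)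
        gcongr
        exact ht.trans htD

end ExpBounds

section Graph

variable {n : ℕ}

lemma adj_iff_exists_edge {ω : EdgeIdx n → Bool} {u v : Fin n} :
    adj ω u v ↔ ∃ e : EdgeIdx n, ω e ∧ (e.1 = (u, v) ∨ e.1 = (v, u)) := by
  unfold adj
  constructor
  · intro h
    split_ifs at h
    · exact ⟨_, h, .inl rfl⟩
    · exact ⟨_, h, .inr rfl⟩
  · rintro ⟨⟨⟨a, b⟩, hab⟩, he, h | h⟩ <;> simp only [Prod.mk.injEq] at h <;> obtain ⟨rfl, rfl⟩ := h
    · simpa [hab] using he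
    · simpa [hab, not_lt_of_gt hab] using he

lemma adj_comm {ω : EdgeIdx n → Bool} {u v : Fin n} : adj ω u v ↔ adj ω v u := by
  simp only [adj_iff_exists_edge, or_comm]

lemma adj_mono {ω ω' : EdgeIdx n → Bool} (h : ω ≤ ω') {u v : Fin n} (huv : adj ω u v) :
    adj ω' u v := by
  obtain ⟨e, he, hends⟩ := adj_iff_exists_edge.1 huv
  exact adj_iff_exists_edge.2 ⟨e, Bool.le_iff_imp.1 (h e) he, hends⟩

def incidentEdges (v : Fin n) : Finset (EdgeIdx n) := {e | e.1.1 = v ∨ e.1.2 = v}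

/-- An edge at `v` corresponds to its other endpoint. -/
lemma deg_eq_trueCount (ω : EdgeIdx n → Bool) (v : Fin n) :
    deg ω v = trueCount (incidentEdges v) ω := by
  symm
  refine card_bij (fun e _ => if e.1.1 = v then e.1.2 else e.1.1) ?_ ?_ ?_
  · rintro ⟨⟨a, b⟩, hab⟩ he
    simp only [incidentEdges, mem_filter, mem_univ, true_and] at he ⊢
    refine adj_iff_exists_edge.2 ⟨_, he.2, ?_⟩
    rcases he.1 with rfl | rfl
    · simp
    · simp [hab.ne]
  · rintro ⟨⟨a, b⟩, hab⟩ he ⟨⟨a', b'⟩, hab'⟩ he' h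
    simp only [incidentEdges, mem_filter, mem_univ, true_and] at he he' h
    ext <;> simp only <;> split_ifs at h <;> grind
  · intro w hw
    simp only [mem_filter, mem_univ, true_and] at hw
    obtain ⟨e, he, hends⟩ := adj_iff_exists_edge.1 hw
    refine ⟨e, ?_, ?_⟩
    · simp only [incidentEdges, mem_filter, mem_univ, true_and]
      rcases hends with h | h <;> simp [h, he]
    · have := e.2
      rcases hends with h | h <;> simp only [h] at this ⊢ <;> grind

lemma card_incidentEdges (v : Fin n) : #(incidentEdges v) = n - 1 := by
  have hcomplete : deg (fun _ => true) v = n - 1 := by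
    rw [deg, filter_congr (q := (· ≠ v)), filter_ne', card_erase_of_mem (mem_univ v), card_univ,
      Fintype.card_fin]
    intro w _
    simp [adj]
    omega
  rw [← hcomplete, deg_eq_trueCount, trueCount, filter_true_of_mem fun _ _ => rfl]

lemma deg_mono (v : Fin n) : Monotone fun ω : EdgeIdx n → Bool => deg ω v :=
  fun _ _ h => card_le_card <| monotone_filter_right _ fun _ _ => adj_mono h

lemma isolCount_antitone : Antitone fun ω : EdgeIdx n → Bool => isolCount ω :=
  fun _ _ h => card_le_card <| monotone_filter_right _ fun u _ hu =>
    Nat.eq_zero_of_le_zero (hu ▸ deg_mono u h)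

lemma isolCount_le_isolCountDel (ω : EdgeIdx n → Bool) (v : Fin n) :
    isolCount ω ≤ isolCountDel ω v :=
  card_le_card <| monotone_filter_right _ fun _ _ hu =>
    Nat.eq_zero_of_le_zero (hu ▸ card_le_card (monotone_filter_right _ fun _ _ h => h.1))

/-- A vertex isolated only after deleting the edges at `v` is `v` itself or a neighbour of `v`. -/
lemma isolCountDel_le (ω : EdgeIdx n → Bool) (v : Fin n) :
    isolCountDel ω v ≤ isolCount ω + (1 + deg ω v) := by
  have hsub : ({u | degDel ω v u = 0} : Finset (Fin n))
      ⊆ univ.filter (deg ω · = 0) ∪ insert v (univ.filter (adj ω v)) := by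
    intro u hu
    simp only [mem_union, mem_insert, mem_filter, mem_univ, true_and]
    rcases eq_or_ne (deg ω u) 0 with h0 | h0
    · exact .inl h0
    obtain ⟨w, hw⟩ := card_pos.1 (Nat.pos_of_ne_zero h0)
    rw [mem_filter] at hw
    by_cases huv : u = v
    · exact .inr (.inl huv)
    have hwv : w = v := by
      by_contra hwv
      simp only [degDel, mem_filter, card_eq_zero, filter_eq_empty_iff] at hu
      exact hu.2 (mem_univ w) ⟨hw.2, huv, hwv⟩
    exact .inr (.inr (adj_comm.1 (hwv ▸ hw.2)))
  calc isolCountDel ω v ≤ (univ.filter (deg ω · = 0) ∪ insert v (univ.filter (adj ω v))).card :=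
        card_le_card hsub
    _ ≤ isolCount ω + (insert v (univ.filter (adj ω v))).card := card_union_le _ _
    _ ≤ isolCount ω + (deg ω v + 1) := Nat.add_le_add_left (card_insert_le _ _) _
    _ = isolCount ω + (1 + deg ω v) := by rw [add_comm (deg ω v)]

end Graph

section DegreeFactor

/-- `γ_θ` is the mean of `degreeFactor θ (d V')`. -/
def degreeFactor (θ : ℝ) (k : ℕ) : ℝ := (1 + k) * (1 + exp (θ * (1 + k)))

variable {n : ℕ} {p θ : ℝ}

lemma degreeFactor_mono (hθ : 0 ≤ θ) : Monotone (degreeFactor θ) := fun k l hkl => by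
  have : (k : ℝ) ≤ l := Nat.cast_le.2 hkl
  unfold degreeFactor
  gcongr

lemma exp_isolCountDel_sub_le (hθ : 0 ≤ θ) (ω : EdgeIdx n → Bool) (v : Fin n) :
    exp (θ * isolCountDel ω v) - exp (θ * isolCount ω)
      ≤ θ / 2 * (exp (θ * isolCount ω) * degreeFactor θ (deg ω v)) := by
  have := exp_mul_sub_exp_mul_le (D := 1 + deg ω v) hθ
    (Nat.cast_le.2 (isolCount_le_isolCountDel ω v)) (by exact_mod_cast isolCountDel_le ω v)
  rw [degreeFactor]
  linarith

lemma sum_bernWeight_degreeFactor (hn : 1 ≤ n) (v : Fin n) :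
    ∑ ω, bernWeight p ω * degreeFactor θ (deg ω v)
      = exp θ * (((n : ℝ) - 1) * p * exp θ * (p * exp θ + 1 - p) ^ (n - 2)
          + (p * exp θ + 1 - p) ^ (n - 1)) + ((n : ℝ) - 1) * p + 1 := by
  -- writing `k` as `k * 1 ^ k` lets the mean degree come out of the same moment formula
  have hexpand : ∀ k : ℕ, degreeFactor θ k
      = 1 + k * 1 ^ k + exp θ * exp θ ^ k + exp θ * (k * exp θ ^ k) := fun k => by
    rw [degreeFactor, show θ * (1 + k) = θ + k * θ by ring, exp_add, exp_nat_mul]; ring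
  have hcast : ((n - 1 : ℕ) : ℝ) = n - 1 := by rw [Nat.cast_sub hn, Nat.cast_one]
  simp_rw [deg_eq_trueCount, hexpand, mul_add, sum_add_distrib, ← sum_mul, mul_left_comm _ (exp θ),
    ← mul_sum, mul_one, sum_bernWeight, sum_bernWeight_mul_pow_trueCount,
    sum_bernWeight_mul_trueCount_mul_pow, card_incidentEdges, hcast, Nat.sub_sub]
  ring

/-- For fixed `v`, `exp (θ Y)` decreases and `degreeFactor θ (deg · v)` increases with the edge
set, so Harris' inequality decouples them. -/
lemma sum_bernWeight_exp_isolCountDel_sub_le (hp₀ : 0 ≤ p) (hp₁ : p ≤ 1) (hθ : 0 ≤ θ)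
    (v : Fin n) :
    ∑ ω, bernWeight p ω * (exp (θ * isolCountDel ω v) - exp (θ * isolCount ω))
      ≤ θ / 2 * ((∑ ω : EdgeIdx n → Bool, bernWeight p ω * exp (θ * isolCount ω))
        * ∑ ω, bernWeight p ω * degreeFactor θ (deg ω v)) := by
  have hf : Antitone fun ω : EdgeIdx n → Bool => exp (θ * isolCount ω) := fun _ _ h => by
    have := isolCount_antitone h
    dsimp only
    gcongr
  have hg : Monotone fun ω : EdgeIdx n → Bool => degreeFactor θ (deg ω v) :=
    (degreeFactor_mono hθ).comp (deg_mono v)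
  calc ∑ ω, bernWeight p ω * (exp (θ * isolCountDel ω v) - exp (θ * isolCount ω))
      ≤ ∑ ω, θ / 2 * (bernWeight p ω * (exp (θ * isolCount ω) * degreeFactor θ (deg ω v))) :=
        sum_le_sum fun ω _ => (mul_le_mul_of_nonneg_left (exp_isolCountDel_sub_le hθ ω v)
          (bernWeight_nonneg hp₀ hp₁ ω)).trans_eq (by ring)
    _ ≤ _ := by
        rw [← mul_sum]
        gcongr
        exact harris_bernWeight hp₀ hp₁ hf hg

end DegreeFactor

section Integrals

variable {p : ℝ}

lemma bern_real_singleton (hp₀ : 0 ≤ p) (hp₁ : p ≤ 1) (b : Bool) :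
    (bern p).real {b} = if b then p else 1 - p := by
  cases b <;> simp [bern, measureReal_def, hp₀, hp₁]

lemma integral_pi_bern {ι : Type*} [Fintype ι] [DecidableEq ι] (hp₀ : 0 ≤ p) (hp₁ : p ≤ 1)
    (f : (ι → Bool) → ℝ) :
    ∫ ω, f ω ∂(Measure.pi fun _ : ι => bern p) = ∑ ω, bernWeight p ω * f ω := by
  rw [integral_fintype .of_finite]
  refine sum_congr rfl fun ω _ => ?_
  rw [smul_eq_mul, measureReal_def, Measure.pi_singleton, ENNReal.toReal_prod, bernWeight]
  simp_rw [← measureReal_def, bern_real_singleton hp₀ hp₁]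

lemma integral_gnpV {n : ℕ} (hn : n ≠ 0) (F : (EdgeIdx n → Bool) × Fin n → ℝ) :
    ∫ x, F x ∂gnpV n p = (n : ℝ)⁻¹ * ∑ v, ∫ ω, F (ω, v) ∂gnp n p := by
  have : NeZero n := ⟨hn⟩
  have : IsFiniteMeasure (gnp n p) := by unfold gnp; infer_instance
  rw [gnpV, integral_prod_symm _ .of_finite, integral_fintype .of_finite, mul_sum]
  refine sum_congr rfl fun v _ => ?_
  simp [measureReal_def, uniformOn_univ]

end Integrals

/-- bound on `E(e^{θ Y^s} − e^{θ Y})` for `θ ≥ 0`. -/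
theorem exp_size_bias_diff_bound (n : ℕ) (hn : 2 ≤ n) (p : ℝ)
    (hp : p ∈ Set.Ioo (0 : ℝ) 1)
    (α φ γ : ℝ → ℝ)
    (hα : ∀ θ, α θ = (p * Real.exp θ + 1 - p) ^ (n - 1))
    (hφ : ∀ θ, φ θ = ((n : ℝ) - 1) * p * Real.exp θ * (p * Real.exp θ + 1 - p) ^ (n - 2))
    (hγ : ∀ θ, γ θ = Real.exp θ * (φ θ + α θ) + ((n : ℝ) - 1) * p + 1) :
    ∀ θ : ℝ, 0 ≤ θ →
      ∫ x, (Real.exp (θ * (isolCountDel x.1 x.2 : ℝ))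
          - Real.exp (θ * (isolCount x.1 : ℝ))) ∂(gnpV n p)
        ≤ θ * γ θ / 2 * ∫ ω, Real.exp (θ * (isolCount ω : ℝ)) ∂(gnp n p) := by
  intro θ hθ
  have hp₀ := hp.1.le
  have hp₁ := hp.2.le
  have hvertex : ∀ v : Fin n,
      ∑ ω, bernWeight p ω * (exp (θ * isolCountDel ω v) - exp (θ * isolCount ω))
        ≤ θ * γ θ / 2 * ∑ ω : EdgeIdx n → Bool, bernWeight p ω * exp (θ * isolCount ω) :=
      fun v => by
    have := sum_bernWeight_exp_isolCountDel_sub_le hp₀ hp₁ hθ v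
    rwa [sum_bernWeight_degreeFactor (by omega), ← hφ, ← hα, ← hγ, mul_comm _ (γ θ), ← mul_assoc,
      div_mul_eq_mul_div] at this
  simp only [integral_gnpV (p := p) (by omega : n ≠ 0), gnp, integral_pi_bern hp₀ hp₁]
  calc (n : ℝ)⁻¹ * ∑ v : Fin n, ∑ ω, bernWeight p ω
          * (exp (θ * isolCountDel ω v) - exp (θ * isolCount ω))
      ≤ (n : ℝ)⁻¹ * ∑ _v : Fin n, θ * γ θ / 2 * ∑ ω, bernWeight p ω * exp (θ * isolCount ω) := by
        gcongr with v
        exact hvertex v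
    _ = θ * γ θ / 2 * ∑ ω, bernWeight p ω * exp (θ * isolCount ω) := by
        rw [sum_const, card_univ, Fintype.card_fin, nsmul_eq_mul, inv_mul_cancel_left₀]
        positivity

end ErdosRenyiIsolated
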